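/- arXiv:2507.10799 — 3 statements merged into one kernel-verified Lean document; each statement's English description precedes it below -/
import Mathlib

section
/- Decomposition theorem: every stream function F : M → N can be decomposed into a monoid homomorphism f : M → State[M, N] given by f(m) = (s ↦ (s·m, ΔF(s,m))), an initial state s₀ = ε_M, and initial output o₀ = F(ε_M), such that for all m ∈ M, F(m) = o₀ · (second component of f(m)(s₀)). -/
/-- The sequential product on `S → S × M` ("State[S, M]"). -/
def stProd {S M : Type*} [Monoid M] (α β : S → S × M) : S → S × M :=
  fun s =>
    let p := α s
    let q := β p.1
    (q.1, p.2 * q.2)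

/-- The identity element of `State[S, M]`. -/
def stOne (S : Type*) {M : Type*} [Monoid M] : S → S × M := fun s => (s, 1)

/-- Decomposition theorem: every stream function `F : M → N` decomposes into a
monoid homomorphism `f : M → State[M, N]`, `f m = fun s => (s * m, ΔF s m)`,
initial state `1` and initial output `F 1`, with
`F m = F 1 * (f m 1).2` for all `m`. -/
theorem decomposition {M N : Type*} [Monoid M] [Monoid N]
    (F : M → N) (ΔF : M → M → N)
    (h1 : ∀ p a : M, F (p * a) = F p * ΔF p a)
    (h2a : ∀ p : M, ΔF p 1 = 1)
    (h2b : ∀ p a b : M, ΔF p (a * b) = ΔF p a * ΔF (p * a) b) :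
    let f : M → (M → M × N) := fun m => fun s => (s * m, ΔF s m)
    (f 1 = stOne M) ∧
    (∀ a b : M, f (a * b) = stProd (f a) (f b)) ∧
    (∀ m : M, F m = F 1 * (f m 1).2) := by
  intro f
  refine ⟨funext fun s => ?_, fun a b => funext fun s => ?_, fun m => ?_⟩
  · simp only [f, stOne, mul_one, h2a]
  · simp only [f, stProd, mul_assoc, h2b]
  · simpa only [f, one_mul] using h1 1 m
end

section
/- Expressive soundness: for any stream processor (S, f, s₀, o₀) where f : M → State[S, N] is a monoid homomorphism, s₀ ∈ S, o₀ ∈ N, the function F(m) = o₀ · out(f(m)(s₀)) is a stream function, with update ΔF(p, a) = out(f(a)(st(f(p)(s₀)))). -/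
section StateHom

variable {M N S : Type*} [Mul M] [Monoid N] {f : M → S → S × N}

theorem stProd_apply (α β : S → S × N) (s : S) :
    stProd α β s = ((β (α s).1).1, (α s).2 * (β (α s).1).2) :=
  rfl

theorem st_apply_mul_of_map_mul (hmul : ∀ a b : M, f (a * b) = stProd (f a) (f b))
    (a b : M) (s : S) : (f (a * b) s).1 = (f b (f a s).1).1 := by
  rw [hmul, stProd_apply]

theorem out_apply_mul_of_map_mul (hmul : ∀ a b : M, f (a * b) = stProd (f a) (f b))
    (a b : M) (s : S) : (f (a * b) s).2 = (f a s).2 * (f b (f a s).1).2 := by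
  rw [hmul, stProd_apply]

end StateHom

/-- Expressive soundness: the semantics `F m = o₀ * out (f m s₀)` of any
stream processor `(S, f, s₀, o₀)` is a stream function, with update
`ΔF p a = out (f a (st (f p s₀)))`. -/
theorem expressive_soundness {M N S : Type*} [Monoid M] [Monoid N]
    (f : M → (S → S × N)) (s₀ : S) (o₀ : N)
    (hone : f 1 = stOne S)
    (hmul : ∀ a b : M, f (a * b) = stProd (f a) (f b)) :
    let F : M → N := fun m => o₀ * (f m s₀).2
    let ΔF : M → M → N := fun p a => (f a (f p s₀).1).2
    (∀ p a : M, F (p * a) = F p * ΔF p a) ∧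
    (∀ p : M, ΔF p 1 = 1) ∧
    (∀ p a b : M, ΔF p (a * b) = ΔF p a * ΔF (p * a) b) := by
  refine ⟨fun p a => ?_, fun p => ?_, fun p a b => ?_⟩
  · change o₀ * (f (p * a) s₀).2 = o₀ * (f p s₀).2 * (f a (f p s₀).1).2
    rw [out_apply_mul_of_map_mul hmul, mul_assoc]
  · change (f 1 (f p s₀).1).2 = 1
    rw [hone]
    rfl
  · change (f (a * b) (f p s₀).1).2 = (f a (f p s₀).1).2 * (f b (f (p * a) s₀).1).2
    rw [out_apply_mul_of_map_mul hmul, st_apply_mul_of_map_mul hmul]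
end

section
/- Fusion: if f : M → N is a monoid homomorphism and (S, g, s₀, o₀) is a stream processor from N to P, then the processor (S, f ; g, s₀, o₀) is a stream processor from M to P whose semantics equals the semantics of the sequential composition of the pure processor of f with (S, g, s₀, o₀). -/
section StateHom

variable {M N P S : Type*} [Monoid M] [Monoid N] [Monoid P] {g : N → S → S × P}

theorem stOne_apply (s : S) : stOne S s = (s, (1 : P)) := rfl

theorem map_one_comp_monoidHom (f : M →* N) (hgone : g 1 = stOne S) : g (f 1) = stOne S := by
  rw [map_one, hgone]

theorem map_mul_comp_monoidHom (f : M →* N)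
    (hgmul : ∀ a b : N, g (a * b) = stProd (g a) (g b)) (a b : M) :
    g (f (a * b)) = stProd (g (f a)) (g (f b)) := by
  rw [map_mul, hgmul]

end StateHom

/-- Fusion: for a monoid homomorphism `f : M → N` and a stream processor
`(S, g, s₀, o₀) : N ⇝ P`, the processor `(S, f ; g, s₀, o₀)` is a stream
processor (i.e. `f ; g` is a homomorphism into `State[S, P]`) whose semantics
equals the semantics of `pure f` composed with `(S, g, s₀, o₀)`. -/
theorem fusion {M N P S : Type*} [Monoid M] [Monoid N] [Monoid P]
    (f : M →* N)
    (g : N → (S → S × P)) (s₀ : S) (o₀ : P)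
    (hgone : g 1 = stOne S)
    (hgmul : ∀ a b : N, g (a * b) = stProd (g a) (g b)) :
    -- `f ; g` is a homomorphism into State[S, P]:
    ((g (f 1) = stOne S) ∧
     (∀ a b : M, g (f (a * b)) = stProd (g (f a)) (g (f b)))) ∧
    -- its semantics agrees with the composition of `pure f` with the
    -- processor `(S, g, s₀, o₀)` (whose composite has state `Unit × S`,
    -- initial state `(∗, st (g 1 s₀)) = (∗, s₀)` and initial output
    -- `o₀ * out (g 1 s₀)`):
    (let h : M → (Unit × S → (Unit × S) × P) := fun m => fun us =>
      let n := f m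
      let sp := g n us.2
      (((), sp.1), sp.2)
    ∀ m : M,
      o₀ * (g (f m) s₀).2 =
      (o₀ * (g 1 s₀).2) * (h m ((), (g 1 s₀).1)).2) := by
  refine ⟨⟨map_one_comp_monoidHom f hgone, map_mul_comp_monoidHom f hgmul⟩, fun m => ?_⟩
  -- `g 1 = stOne S` makes the composite start in state `s₀` with output `o₀`.
  have hstart : g 1 s₀ = (s₀, 1) := by rw [hgone, stOne_apply]
  simp only [hstart, mul_one]
end
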